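/- arXiv:1304.4362 — 3 statements merged into one kernel-verified Lean document; each statement's English description precedes it below -/
import Mathlib

section
/- For every integer I ≥ 1, (-1)^I ∑_{k=0}^I (-1)^k C(I,k) k^(I+2) = (I(I+1)(I+2)(3I+1)/24) · I!. -/
/-!
Writing `k ^ m = ∑ j, S(m, j) * j! * C(k, j)` with Stirling numbers of the second kind `S`, the
alternating sum `∑ k, (-1) ^ (n - k) * C(n, k) * k ^ m` is the `n`-th forward difference of
`x ↦ x ^ m` at `0`; since `Δ^[n] C(·, j)` vanishes at `0` unless `j = n`, it equals
`n! * S(m, n)`.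
The Stirling recurrence gives `S(n + 2, n) = n (n + 1) (n + 2) (3 n + 1) / 24`.
-/

open Finset Nat

namespace Nat

theorem descFactorial_mul_eq_descFactorial_succ_add (x j : ℕ) :
    x.descFactorial j * x = x.descFactorial (j + 1) + j * x.descFactorial j := by
  rcases lt_or_ge x j with hxj | hjx
  · simp [descFactorial_eq_zero_iff_lt.mpr hxj]
  · rw [descFactorial_succ, ← add_mul, Nat.sub_add_cancel hjx, mul_comm]

theorem pow_eq_sum_stirlingSecond_mul_descFactorial (m x : ℕ) :
    x ^ m = ∑ j ∈ range (m + 1), stirlingSecond m j * x.descFactorial j := by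
  induction m with
  | zero => simp
  | succ m ih =>
    have hshift : ∑ j ∈ range (m + 1), j * stirlingSecond m j * x.descFactorial j =
        ∑ j ∈ range (m + 1), (j + 1) * stirlingSecond m (j + 1) * x.descFactorial (j + 1) := by
      rw [sum_range_succ', sum_range_succ, stirlingSecond_eq_zero_of_lt (lt_succ_self m)]
      simp
    calc x ^ (m + 1)
        = ∑ j ∈ range (m + 1),
            stirlingSecond m j * (x.descFactorial (j + 1) + j * x.descFactorial j) := by
          rw [pow_succ, ih, sum_mul]
          simp only [mul_assoc, descFactorial_mul_eq_descFactorial_succ_add]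
      _ = ∑ j ∈ range (m + 1), (j + 1) * stirlingSecond m (j + 1) * x.descFactorial (j + 1) +
          ∑ j ∈ range (m + 1), stirlingSecond m j * x.descFactorial (j + 1) := by
          rw [← hshift, add_comm, ← sum_add_distrib]
          exact sum_congr rfl fun j _ ↦ by ring
      _ = ∑ j ∈ range (m + 2), stirlingSecond (m + 1) j * x.descFactorial j := by
          rw [sum_range_succ' _ (m + 1), ← sum_add_distrib]
          simp only [stirlingSecond_succ_succ, stirlingSecond_succ_zero, zero_mul, add_zero,
            add_mul]

theorem stirlingSecond_add_two_self_left (n : ℕ) :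
    24 * stirlingSecond (n + 2) n = n * (n + 1) * (n + 2) * (3 * n + 1) := by
  induction n with
  | zero => simp
  | succ n ih =>
    have hchoose : 2 * (n + 2).choose 2 = (n + 2) * (n + 1) := by
      have := add_one_mul_choose_eq (n + 1) 1
      rw [choose_one_right] at this
      linarith
    rw [stirlingSecond_succ_succ, stirlingSecond_succ_self_left]
    nlinarith [hchoose, ih]

end Nat

theorem fwdDiff_iter_pow_apply_zero (m n : ℕ) :
    (fwdDiff 1)^[n] (fun x : ℕ ↦ (x : ℤ) ^ m) 0 = n ! * stirlingSecond m n := by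
  have hexpand : (fun x : ℕ ↦ (x : ℤ) ^ m) =
      ∑ j ∈ range (m + 1),
        ((stirlingSecond m j * j ! : ℕ) : ℤ) • fun x : ℕ ↦ (x.choose j : ℤ) := by
    ext x
    simp only [Finset.sum_apply, Pi.smul_apply, smul_eq_mul]
    exact_mod_cast (pow_eq_sum_stirlingSecond_mul_descFactorial m x).trans
      (sum_congr rfl fun j _ ↦ by rw [descFactorial_eq_factorial_mul_choose, mul_assoc])
  rw [hexpand, fwdDiff_iter_finsetSum]
  simp only [Finset.sum_apply, fwdDiff_iter_const_smul, Pi.smul_apply, fwdDiff_iter_choose_zero,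
    smul_ite, smul_zero, sum_ite_eq, mem_range]
  split_ifs with hnm
  · push_cast; ring
  · rw [stirlingSecond_eq_zero_of_lt (by omega)]; simp

theorem neg_one_pow_mul_sum_neg_one_pow_mul_choose_mul_pow {R : Type*} [CommRing R] (m n : ℕ) :
    (-1 : R) ^ n * ∑ k ∈ range (n + 1), (-1 : R) ^ k * n.choose k * (k : R) ^ m =
      n ! * stirlingSecond m n := by
  have h := congrArg (Int.cast : ℤ → R)
    (fwdDiff_iter_eq_sum_shift 1 (fun x : ℕ ↦ (x : ℤ) ^ m) n 0)
  simp only [fwdDiff_iter_pow_apply_zero, zero_add, smul_eq_mul] at h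
  push_cast at h
  rw [h, mul_sum]
  refine sum_congr rfl fun k hk ↦ ?_
  obtain ⟨j, rfl⟩ := exists_add_of_le (mem_range_succ_iff.mp hk)
  have hsq : (-1 : R) ^ k * (-1) ^ k = 1 := by rw [← mul_pow]; norm_num
  rw [Nat.add_sub_cancel_left, pow_add]
  linear_combination (-1 : R) ^ j * (k + j).choose k * (k : R) ^ m * hsq

theorem alternating_binomial_moment_succ_succ_general (I : ℕ) :
    (-1 : ℝ) ^ I * ∑ k ∈ Finset.range (I + 1), (-1 : ℝ) ^ k * (I.choose k) * (k : ℝ) ^ (I + 2) =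
      ((I : ℝ) * (I + 1) * (I + 2) * (3 * I + 1) / 24) * (I.factorial : ℝ) := by
  have h : (24 * stirlingSecond (I + 2) I : ℝ) = I * (I + 1) * (I + 2) * (3 * I + 1) :=
    mod_cast stirlingSecond_add_two_self_left I
  rw [neg_one_pow_mul_sum_neg_one_pow_mul_choose_mul_pow, ← h]
  ring

theorem alternating_binomial_moment_succ_succ (I : ℕ) (hI : 1 ≤ I) :
    (-1 : ℝ) ^ I * ∑ k ∈ Finset.range (I + 1), (-1 : ℝ) ^ k * (I.choose k) * (k : ℝ) ^ (I + 2) =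
      ((I : ℝ) * (I + 1) * (I + 2) * (3 * I + 1) / 24) * (I.factorial : ℝ) :=
  alternating_binomial_moment_succ_succ_general I
end

section
/- Define β_N(I) = C(N,I) ∑_{m=0}^I C(I,m) (-1)^m log(N-I+m) for integers 1 ≤ I ≤ N-1 (and allowing I up to N-1 in N). Then the recursion β_N(I+1) = (N/(I+1)) β_{N-1}(I) - ((N-I)/(I+1)) β_N(I) holds for all valid I, N. -/
/-!
Up to sign, the inner sum of `betaCoeff N I` is the `I`-th forward difference of `log` at `N - I`,
so Pascal's rule splits the sum for `I + 1` into the sums for `(N - 1, I)` and `(N, I)`; the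
prefactor `C(N, I + 1)` is then rewritten through the absorption identities
`(I + 1) C(N, I + 1) = N C(N - 1, I) = (N - I) C(N, I)`.
-/

noncomputable def betaCoeff (N I : ℕ) : ℝ :=
  (N.choose I : ℝ) *
    ∑ m ∈ Finset.range (I + 1), (I.choose m : ℝ) * (-1 : ℝ) ^ m * Real.log ((N : ℝ) - I + m)

open Finset

theorem sum_range_choose_succ_mul_neg_one_pow {R : Type*} [CommRing R] (f : ℕ → R) (n : ℕ) :
    ∑ m ∈ range (n + 2), ((n + 1).choose m : R) * (-1) ^ m * f m =
      ∑ m ∈ range (n + 1), (n.choose m : R) * (-1) ^ m * f m -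
        ∑ m ∈ range (n + 1), (n.choose m : R) * (-1) ^ m * f (m + 1) := by
  have pascal (k : ℕ) : ((n + 1).choose (k + 1) : R) * (-1) ^ (k + 1) * f (k + 1) =
      (n.choose (k + 1) : R) * (-1) ^ (k + 1) * f (k + 1) - n.choose k * (-1) ^ k * f (k + 1) := by
    rw [Nat.choose_succ_succ']; push_cast; ring
  have extend : ∑ m ∈ range (n + 1), (n.choose m : R) * (-1) ^ m * f m =
      ∑ m ∈ range (n + 2), (n.choose m : R) * (-1) ^ m * f m := by
    simp [sum_range_succ _ (n + 1)]
  rw [extend, sum_range_succ' _ (n + 1), sum_range_succ' _ (n + 1),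
    sum_congr rfl fun k _ => pascal k, sum_sub_distrib]
  simp only [Nat.choose_zero_right, Nat.cast_one, pow_zero, one_mul]
  abel

theorem betaCoeff_recursion_general (N I : ℕ) (hIN : I + 1 ≤ N - 1) :
    betaCoeff N (I + 1) =
      ((N : ℝ) / (I + 1)) * betaCoeff (N - 1) I - (((N : ℝ) - I) / (I + 1)) * betaCoeff N I := by
  obtain ⟨n, rfl⟩ : ∃ n, N = n + 1 := ⟨N - 1, by omega⟩
  have absorb_pred : ((n + 1).choose (I + 1) : ℝ) * (I + 1) = (n + 1) * n.choose I := by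
    exact_mod_cast (Nat.add_one_mul_choose_eq n I).symm
  have absorb : ((n + 1).choose (I + 1) : ℝ) * (I + 1) = (n + 1).choose I * ((n + 1 : ℝ) - I) := by
    have := congrArg (Nat.cast : ℕ → ℝ) (Nat.choose_succ_right_eq (n + 1) I)
    push_cast [Nat.cast_sub (show I ≤ n + 1 by omega)] at this
    exact this
  have pascal := sum_range_choose_succ_mul_neg_one_pow (fun m => Real.log ((n : ℝ) - I + m)) I
  have shift₀ (x : ℝ) : (n : ℝ) + 1 - (I + 1) + x = n - I + x := by ring
  have shift₁ (x : ℝ) : (n : ℝ) - I + (x + 1) = n + 1 - I + x := by ring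
  simp only [betaCoeff, Nat.add_sub_cancel]
  push_cast at pascal ⊢
  simp only [shift₀, shift₁] at pascal ⊢
  rw [pascal]
  generalize ∑ x ∈ range (I + 1), (I.choose x : ℝ) * (-1) ^ x * Real.log (n - I + x) = A
  generalize ∑ x ∈ range (I + 1), (I.choose x : ℝ) * (-1) ^ x * Real.log (n + 1 - I + x) = B
  field_simp
  linear_combination A * absorb_pred - B * absorb

theorem betaCoeff_recursion (N I : ℕ) (hI : 1 ≤ I) (hIN : I + 1 ≤ N - 1) :
    betaCoeff N (I + 1) =
      ((N : ℝ) / (I + 1)) * betaCoeff (N - 1) I - (((N : ℝ) - I) / (I + 1)) * betaCoeff N I :=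
  betaCoeff_recursion_general N I hIN
end

section
/- For fixed I ≥ 1, as N → ∞, N·C(N,I)·∑_{m=0}^I C(I,m)(-1)^m log(N-I+m) · ((1 - I/N) log(1 - I/N)) → 1. Equivalently, N C(N,I) S_I → 1/((1-x)log(1-x)) with x = I/N in the limit sense. -/
/-!
Write `Δ` for the forward difference with step `1`. The alternating sum equals
`(-1)^I Δ^I log (N - I)`. By the mean value theorem applied to `Δ^(I-1) log`, this is
`(-1)^I Δ^(I-1) (t ↦ t⁻¹) (c)` for some `c ∈ (N - I, N - I + 1)`, and the partial fraction
identity `Δ^n (t ↦ t⁻¹) x = (-1)^n n! / (x (x+1) ⋯ (x+n))` then shows that the sum is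
`-(I-1)! / N^I · (1 + o(1))`. Together with `C(N, I) ~ N^I / I!` and
`N (1 - I/N) log (1 - I/N) → -I`, the product tends to `(-(I-1)!/I!) · (-I) = 1`.
-/

open Filter Finset Nat fwdDiff Topology Asymptotics

theorem sum_choose_mul_neg_one_pow_mul_eq_fwdDiff_iter {R : Type*} [CommRing R]
    (f : R → R) (n : ℕ) (y : R) :
    ∑ m ∈ range (n + 1), (n.choose m : R) * (-1) ^ m * f (y + m) =
      (-1) ^ n * (Δ_[1])^[n] f y := by
  rw [fwdDiff_iter_eq_sum_shift, mul_sum]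
  refine sum_congr rfl fun m hm => ?_
  obtain ⟨d, rfl⟩ := Nat.exists_eq_add_of_le (mem_range_succ_iff.1 hm)
  simp only [zsmul_eq_mul, nsmul_eq_mul, mul_one, Nat.add_sub_cancel_left]
  push_cast
  ring_nf
  simp

theorem fwdDiff_iter_inv {K : Type*} [Field K] (n : ℕ) {x : K} (hx : ∀ j ≤ n, x + j ≠ 0) :
    (Δ_[1])^[n] (fun t : K => t⁻¹) x = (-1) ^ n * n ! / ∏ j ∈ range (n + 1), (x + j) := by
  induction n generalizing x with
  | zero => simp
  | succ n ih =>
    have hx₁ : ∀ j ≤ n, x + 1 + j ≠ 0 := fun j hj => by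
      simpa [add_assoc, add_comm (1 : K)] using hx (j + 1) (by omega)
    have hP : ∏ j ∈ range (n + 1), (x + 1 + j) ≠ 0 :=
      prod_ne_zero_iff.2 fun j hj => hx₁ j (mem_range_succ_iff.1 hj)
    have hQ : ∏ j ∈ range (n + 1), (x + j) ≠ 0 :=
      prod_ne_zero_iff.2 fun j hj => hx j ((mem_range_succ_iff.1 hj).trans n.le_succ)
    have hR₁ : ∏ j ∈ range (n + 2), (x + j) = x * ∏ j ∈ range (n + 1), (x + 1 + j) := by
      rw [prod_range_succ']; push_cast; simp only [add_zero, add_assoc, add_comm (1 : K)]; ring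
    have hR₂ :
        ∏ j ∈ range (n + 2), (x + j) = (∏ j ∈ range (n + 1), (x + j)) * (x + (n + 1)) := by
      rw [prod_range_succ]; push_cast; ring
    have hR : ∏ j ∈ range (n + 2), (x + j) ≠ 0 :=
      hR₁ ▸ mul_ne_zero (by simpa using hx 0 (by omega)) hP
    rw [Function.iterate_succ_apply', fwdDiff, ih hx₁, ih fun j hj => hx j (by omega),
      div_sub_div _ _ hP hQ, div_eq_div_iff (mul_ne_zero hP hQ) hR, factorial_succ]
    push_cast
    linear_combination ((-1) ^ n * n ! * ∏ j ∈ range (n + 1), (x + j)) * hR₁ -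
      ((-1) ^ n * n ! * ∏ j ∈ range (n + 1), (x + 1 + j)) * hR₂

theorem HasDerivAt.fwdDiff_iter {𝕜 F : Type*} [NontriviallyNormedField 𝕜]
    [NormedAddCommGroup F] [NormedSpace 𝕜 F] {f f' : 𝕜 → F} {x h : 𝕜} {n : ℕ}
    (hf : ∀ k ≤ n, HasDerivAt f (f' (x + k • h)) (x + k • h)) :
    HasDerivAt ((Δ_[h])^[n] f) ((Δ_[h])^[n] f' x) x := by
  rw [funext (fwdDiff_iter_eq_sum_shift h f n), fwdDiff_iter_eq_sum_shift h f' n x]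
  exact HasDerivAt.fun_sum fun k hk =>
    ((hf k (mem_range_succ_iff.1 hk)).comp_add_const x (k • h)).const_smul
      ((-1 : ℤ) ^ (n - k) * n.choose k)

theorem exists_fwdDiff_iter_succ_eq_of_hasDerivAt {f f' : ℝ → ℝ} {y : ℝ} {n : ℕ}
    (hf : ∀ t ∈ Set.Icc y (y + (n + 1)), HasDerivAt f (f' t) t) :
    ∃ c ∈ Set.Ioo y (y + 1), (Δ_[1])^[n + 1] f y = (Δ_[1])^[n] f' c := by
  have hderiv : ∀ t ∈ Set.Icc y (y + 1), HasDerivAt ((Δ_[1])^[n] f) ((Δ_[1])^[n] f' t) t :=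
    fun t ht => HasDerivAt.fwdDiff_iter fun k hk => by
      have hk' : (k : ℝ) ≤ n := by exact_mod_cast hk
      rw [nsmul_one]
      exact hf _ ⟨by linarith [ht.1, k.cast_nonneg (α := ℝ)], by linarith [ht.2]⟩
  obtain ⟨c, hc, hslope⟩ := exists_hasDerivAt_eq_slope _ _ (lt_add_one y)
    (fun t ht => (hderiv t ht).continuousAt.continuousWithinAt)
    (fun t ht => hderiv t (Set.Ioo_subset_Icc_self ht))
  refine ⟨c, hc, ?_⟩
  rw [hslope, add_sub_cancel_left, div_one, Function.iterate_succ_apply']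
  rfl

theorem exists_fwdDiff_iter_succ_log_eq (n : ℕ) {y : ℝ} (hy : 0 < y) :
    ∃ c ∈ Set.Ioo y (y + 1),
      (Δ_[1])^[n + 1] Real.log y = (-1) ^ n * n ! / ∏ j ∈ range (n + 1), (c + j) := by
  obtain ⟨c, hc, hlog⟩ :=
    exists_fwdDiff_iter_succ_eq_of_hasDerivAt (n := n) (f' := fun t => t⁻¹)
    fun t ht => Real.hasDerivAt_log (by linarith [ht.1])
  exact ⟨c, hc, hlog.trans (fwdDiff_iter_inv n fun j _ => by
    linarith [hc.1, j.cast_nonneg (α := ℝ)])⟩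

theorem tendsto_pow_div_prod_add_atTop (a : ℝ) (k : ℕ) :
    Tendsto (fun y : ℝ => y ^ k / ∏ j ∈ range k, (y + a + j)) atTop (𝓝 1) := by
  have hshift : ∀ j ∈ range k, (fun y : ℝ => y + a + j) ~[atTop] fun y => y := fun j _ => by
    simpa only [add_assoc] using
      IsEquivalent.refl.add_const_of_norm_tendsto_atTop (c := a + j) tendsto_norm_atTop_atTop
  have hprod := IsEquivalent.finsetProd hshift
  simp only [prod_const, card_range] at hprod
  refine (isEquivalent_iff_tendsto_one ?_).1 hprod.symm
  filter_upwards [eventually_gt_atTop (-a)] with y hy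
  have : 0 < y + a := by linarith
  exact prod_ne_zero_iff.2 fun j _ => by positivity

theorem tendsto_neg_one_pow_mul_pow_mul_fwdDiff_iter_log (n : ℕ) :
    Tendsto (fun y : ℝ => (-1) ^ n * y ^ (n + 1) * (Δ_[1])^[n + 1] Real.log y)
      atTop (𝓝 n !) := by
  have hbound (a : ℝ) : Tendsto
      (fun y : ℝ => n ! * (y ^ (n + 1) / ∏ j ∈ range (n + 1), (y + a + j))) atTop (𝓝 n !) := by
    simpa using (tendsto_pow_div_prod_add_atTop a (n + 1)).const_mul (n ! : ℝ)
  have hmvt : ∀ᶠ y in atTop, ∃ c ∈ Set.Ioo y (y + 1),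
      (-1) ^ n * y ^ (n + 1) * (Δ_[1])^[n + 1] Real.log y =
        n ! * (y ^ (n + 1) / ∏ j ∈ range (n + 1), (c + j)) := by
    filter_upwards [eventually_gt_atTop 0] with y hy
    obtain ⟨c, hc, hlog⟩ := exists_fwdDiff_iter_succ_log_eq n hy
    have hsq : ((-1 : ℝ) ^ n) ^ 2 = 1 := by rw [← pow_mul, pow_mul', neg_one_sq, one_pow]
    refine ⟨c, hc, ?_⟩
    rw [hlog]
    linear_combination (y ^ (n + 1) * (n ! / ∏ j ∈ range (n + 1), (c + j))) * hsq
  -- `y < c < y + 1` traps the product between its values at `c = y` and `c = y + 1`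
  refine tendsto_of_tendsto_of_tendsto_of_le_of_le' (hbound 1) (by simpa using hbound 0) ?_ ?_
  · filter_upwards [hmvt, eventually_gt_atTop 0] with y ⟨c, hc, hy⟩ hy₀
    have hc₀ : 0 < c := hy₀.trans hc.1
    rw [hy]
    gcongr
    linarith [hc.2]
  · filter_upwards [hmvt, eventually_gt_atTop 0] with y ⟨c, hc, hy⟩ hy₀
    rw [hy]
    gcongr
    linarith [hc.1]

theorem tendsto_pow_mul_sum_choose_mul_log {I : ℕ} (hI : 1 ≤ I) :
    Tendsto (fun N : ℕ => (N : ℝ) ^ I *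
      ∑ m ∈ range (I + 1), (I.choose m : ℝ) * (-1) ^ m * Real.log (N - I + m))
      atTop (𝓝 (-(I - 1)!)) := by
  obtain ⟨n, rfl⟩ := Nat.exists_eq_add_of_le' hI
  have hshift : Tendsto (fun N : ℕ => (N : ℝ) - (n + 1 : ℕ)) atTop atTop :=
    tendsto_atTop_add_const_right _ _ tendsto_natCast_atTop_atTop
  have hratio :
      Tendsto (fun N : ℕ => ((N : ℝ) / (N - (n + 1 : ℕ))) ^ (n + 1)) atTop (𝓝 1) := by
    simpa [sub_eq_add_neg] using
      (tendsto_natCast_div_add_atTop (-((n + 1 : ℕ) : ℝ))).pow (n + 1)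
  have hlim :=
    (hratio.mul ((tendsto_neg_one_pow_mul_pow_mul_fwdDiff_iter_log n).comp hshift)).neg
  rw [one_mul] at hlim
  -- with `y = N - I`, the left side is `-(N / y) ^ I * ((-1) ^ (I - 1) * y ^ I * Δ^I log y)`
  refine hlim.congr' ?_
  filter_upwards [eventually_gt_atTop (n + 1)] with N hN
  have hy : (N : ℝ) - (n + 1 : ℕ) ≠ 0 := sub_ne_zero.2 (by exact_mod_cast hN.ne')
  rw [sum_choose_mul_neg_one_pow_mul_eq_fwdDiff_iter Real.log, Function.comp_apply, div_pow]
  field_simp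
  ring

theorem tendsto_natCast_mul_one_sub_div_mul_log (a : ℝ) :
    Tendsto (fun N : ℕ => (N : ℝ) * ((1 - a / N) * Real.log (1 - a / N)))
      atTop (𝓝 (-a)) := by
  have hlog := (Real.tendsto_mul_log_one_add_div_atTop (-a)).comp tendsto_natCast_atTop_atTop
  have hone : Tendsto (fun N : ℕ => 1 - a / N) atTop (𝓝 1) := by
    simpa using tendsto_const_nhds.sub (tendsto_const_div_atTop_nhds_zero_nat a)
  simpa [Function.comp_def, neg_div, ← sub_eq_add_neg, mul_left_comm] using hone.mul hlog

theorem betaCoeff_limit (I : ℕ) (hI : 1 ≤ I) :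
    Tendsto (fun N : ℕ =>
      (N : ℝ) * (N.choose I : ℝ) *
        (∑ m ∈ Finset.range (I + 1), (I.choose m : ℝ) * (-1 : ℝ) ^ m *
          Real.log ((N : ℝ) - I + m)) *
        ((1 - (I : ℝ) / N) * Real.log (1 - (I : ℝ) / N)))
      atTop (nhds 1) := by
  have hinv : Tendsto (fun N : ℕ => (N : ℝ) * (N : ℝ)⁻¹) atTop (𝓝 1) :=
    tendsto_const_nhds.congr' <| by
      filter_upwards [eventually_ne_atTop 0] with N hN
      field_simp
  have hlim := ((ProbabilityTheory.tendsto_choose_mul_pow_atTop I hinv).mul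
    (tendsto_pow_mul_sum_choose_mul_log hI)).mul (tendsto_natCast_mul_one_sub_div_mul_log I)
  have hvalue : (1 : ℝ) ^ I / I ! * -((I - 1)! : ℝ) * -I = 1 := by
    rw [one_pow, ← Nat.mul_factorial_pred (by omega : I ≠ 0)]
    push_cast
    field_simp
  rw [hvalue] at hlim
  refine hlim.congr' ?_
  filter_upwards [eventually_ne_atTop 0] with N hN
  rw [inv_pow]
  field_simp
end
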